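/- arXiv:2203.16176 — 8 statements merged into one kernel-verified Lean document; each statement's English description precedes it below -/
import Mathlib

section
/- The matching produced by the Constrained Random Serial Dictatorship mechanism is feasible and is an α-approximation of the government-optimal matching, i.e., its government objective value z(μ) is at least α times the maximum government objective value over all feasible matchings. -/
open Classical

/-- A matching is feasible if each location `j` hosts exactly `q j` families. -/
def feasible {F L : Type} [Fintype F] [DecidableEq L] (q : L → ℕ) (μ : F → L) : Prop :=
  ∀ j : L, (Finset.univ.filter (fun i => μ i = j)).card = q j

/-- The government objective: expected number of successfully integrated families. -/
def z {F L : Type} [Fintype F] (π : F → L → ℝ) (μ : F → L) : ℝ :=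
  ∑ i, π i (μ i)

/-- `μ'` extends the partial matching `p`. -/
def ExtendsP {F L : Type} (μ' : F → L) (p : F → Option L) : Prop :=
  ∀ i j, p i = some j → μ' i = j

/-- There is a feasible completion of the partial matching `p` with objective at least `c`. -/
def okExt {F L : Type} [Fintype F] [DecidableEq L] (q : L → ℕ) (π : F → L → ℝ)
    (c : ℝ) (p : F → Option L) : Prop :=
  ∃ μ' : F → L, feasible q μ' ∧ ExtendsP μ' p ∧ c ≤ z π μ'

/-- Number of families currently assigned to location `j`. -/
def assignedCount {F L : Type} [Fintype F] [DecidableEq L] (p : F → Option L) (j : L) : ℕ :=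
  (Finset.univ.filter (fun i => p i = some j)).card

/-- One step of CRSD: family `i` is assigned to the first location in its preference list
that has remaining capacity and preserves achievability of objective value `c`. -/
noncomputable def crsdStep {F L : Type} [Fintype F] [DecidableEq F] [DecidableEq L]
    (q : L → ℕ) (π : F → L → ℝ) (c : ℝ) (prefs : F → List L)
    (p : F → Option L) (i : F) : F → Option L :=
  match (prefs i).find? (fun j =>
      decide (assignedCount p j < q j ∧ okExt q π c (Function.update p i (some j)))) with
  | some j => Function.update p i (some j)
  | none => p

/-- Running CRSD on the (random) order `order` of families, starting from the empty matching. -/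
noncomputable def crsdRun {F L : Type} [Fintype F] [DecidableEq F] [DecidableEq L]
    (q : L → ℕ) (π : F → L → ℝ) (c : ℝ) (prefs : F → List L)
    (order : List F) : F → Option L :=
  order.foldl (crsdStep q π c prefs) (fun _ => none)

/-!
Invariant: the partial matching admits a feasible completion `μ'` of value at least `α z*`.
It holds for the empty matching since `α z* ≤ z*` (objectives are nonnegative, `α ≤ 1`), and
every step preserves it by construction. It also forces progress: when an unassigned family `i`
is processed, location `μ' i` still has capacity (`μ'` puts `i` there on top of everyone
already assigned there) and assigning `i` to it keeps `μ'` a completion, so some location of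
`i`'s list is accepted. Once every family is assigned, the completion is the matching itself.
-/

section CRSD

variable {F L : Type}

lemma ExtendsP.update_self [DecidableEq F] {μ' : F → L} {p : F → Option L}
    (h : ExtendsP μ' p) (i : F) :
    ExtendsP μ' (Function.update p i (some (μ' i))) := by
  intro k j hk
  rcases eq_or_ne k i with rfl | hne
  · simpa using hk
  · exact h k j (by rwa [Function.update_of_ne hne] at hk)

variable [Fintype F] [DecidableEq L] {q : L → ℕ} {π : F → L → ℝ} {c : ℝ}

lemma okExt_empty {μ : F → L} (hfeas : feasible q μ) (hc : c ≤ z π μ) :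
    okExt q π c (fun _ => none) :=
  ⟨μ, hfeas, (fun _ _ h => nomatch h), hc⟩

lemma assignedCount_lt_of_extendsP {μ' : F → L} {p : F → Option L} (hfeas : feasible q μ')
    (hext : ExtendsP μ' p) {i : F} (hi : p i = none) :
    assignedCount p (μ' i) < q (μ' i) := by
  rw [← hfeas (μ' i)]
  refine Finset.card_lt_card ⟨fun k hk => ?_, fun hsub => ?_⟩
  · simp only [Finset.mem_filter] at hk ⊢
    exact ⟨hk.1, hext k _ hk.2⟩
  · simpa [hi] using hsub (Finset.mem_filter.mpr ⟨Finset.mem_univ i, rfl⟩)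

lemma exists_eq_some_of_okExt {p : F → Option L} (hp : okExt q π c p)
    (hsome : ∀ i, (p i).isSome) :
    ∃ μ : F → L, (∀ i, p i = some (μ i)) ∧ feasible q μ ∧ c ≤ z π μ := by
  obtain ⟨μ', hfeas, hext, hz⟩ := hp
  refine ⟨μ', fun i => ?_, hfeas, hz⟩
  obtain ⟨j, hj⟩ := Option.isSome_iff_exists.mp (hsome i)
  rw [hj, hext i j hj]

variable [DecidableEq F] {prefs : F → List L}

lemma crsdStep_eq_self_or_update (p : F → Option L) (i : F) :
    crsdStep q π c prefs p i = p ∨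
      ∃ j, crsdStep q π c prefs p i = Function.update p i (some j) ∧
        okExt q π c (Function.update p i (some j)) := by
  unfold crsdStep
  split
  next j hj =>
    have hj := List.find?_some hj
    simp only [decide_eq_true_eq] at hj
    exact Or.inr ⟨j, rfl, hj.2⟩
  next => exact Or.inl rfl

lemma okExt_crsdStep {p : F → Option L} (hp : okExt q π c p) (i : F) :
    okExt q π c (crsdStep q π c prefs p i) := by
  rcases crsdStep_eq_self_or_update (prefs := prefs) p i with h | ⟨j, h, hok⟩ <;> rw [h]
  exacts [hp, hok]

lemma crsdStep_isSome {p : F → Option L} (i : F) {k : F} (hk : (p k).isSome) :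
    (crsdStep q π c prefs p i k).isSome := by
  rcases crsdStep_eq_self_or_update (prefs := prefs) (c := c) p i with h | ⟨j, h, -⟩
  · rwa [h]
  · rw [h]
    rcases eq_or_ne k i with rfl | hne
    · simp
    · rwa [Function.update_of_ne hne]

lemma crsdStep_self_isSome (hprefs : ∀ i j, j ∈ prefs i) {p : F → Option L}
    (hp : okExt q π c p) (i : F) : (crsdStep q π c prefs p i i).isSome := by
  cases hi : p i with
  | some _ => exact crsdStep_isSome i (by simp [hi])
  | none =>
    obtain ⟨μ', hfeas, hext, hz⟩ := hp
    have hcand : ∃ j ∈ prefs i, decide (assignedCount p j < q j ∧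
        okExt q π c (Function.update p i (some j))) = true :=
      ⟨μ' i, hprefs i _, decide_eq_true
        ⟨assignedCount_lt_of_extendsP hfeas hext hi, μ', hfeas, hext.update_self i, hz⟩⟩
    obtain ⟨j, hj⟩ := Option.isSome_iff_exists.mp (List.find?_isSome.mpr hcand)
    unfold crsdStep
    rw [hj]
    simp

lemma foldl_crsdStep_isSome {p : F → Option L} (l : List F) {k : F} (hk : (p k).isSome) :
    (l.foldl (crsdStep q π c prefs) p k).isSome := by
  induction l generalizing p with
  | nil => exact hk
  | cons i l ih => exact ih (crsdStep_isSome i hk)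

lemma okExt_foldl_crsdStep {p : F → Option L} (hp : okExt q π c p) (l : List F) :
    okExt q π c (l.foldl (crsdStep q π c prefs) p) := by
  induction l generalizing p with
  | nil => exact hp
  | cons i l ih => exact ih (okExt_crsdStep hp i)

lemma foldl_crsdStep_isSome_of_mem (hprefs : ∀ i j, j ∈ prefs i) {p : F → Option L}
    (hp : okExt q π c p) {l : List F} {k : F} (hk : k ∈ l) :
    (l.foldl (crsdStep q π c prefs) p k).isSome := by
  induction l generalizing p with
  | nil => cases hk
  | cons i l ih =>
    rcases List.mem_cons.mp hk with rfl | hk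
    · exact foldl_crsdStep_isSome l (crsdStep_self_isSome hprefs hp k)
    · exact ih (okExt_crsdStep hp i) hk

end CRSD

theorem crsd_feasible_and_alpha_approx_general
    {F L : Type} [Fintype F] [DecidableEq F] [DecidableEq L]
    (q : L → ℕ) (π : F → L → ℝ) (prefs : F → List L) (α zs : ℝ)
    (hπ : ∀ i j, π i j ∈ Set.Icc (0 : ℝ) 1)
    (hα : α ∈ Set.Icc (0 : ℝ) 1)
    (hzs : IsGreatest {x : ℝ | ∃ μ : F → L, feasible q μ ∧ x = z π μ} zs)
    (hprefs : ∀ i, (prefs i).Nodup ∧ ∀ j : L, j ∈ prefs i)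
    (order : List F) (hall : ∀ i : F, i ∈ order) :
    ∃ μ : F → L, (∀ i, crsdRun q π (α * zs) prefs order i = some (μ i)) ∧
      feasible q μ ∧ α * zs ≤ z π μ := by
  obtain ⟨μ₀, hfeas₀, rfl⟩ := hzs.1
  have hz₀ : 0 ≤ z π μ₀ := Finset.sum_nonneg fun i _ => (hπ i (μ₀ i)).1
  have hok₀ : okExt q π (α * z π μ₀) (fun _ => none) :=
    okExt_empty hfeas₀ (mul_le_of_le_one_left hz₀ hα.2)
  have hmem : ∀ i j, j ∈ prefs i := fun i => (hprefs i).2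
  unfold crsdRun
  exact exists_eq_some_of_okExt (okExt_foldl_crsdStep hok₀ order)
    fun i => foldl_crsdStep_isSome_of_mem hmem hok₀ (hall i)

/-- The matching produced by CRSD is feasible and is an α-approximation of
the government-optimal matching. -/
theorem crsd_feasible_and_alpha_approx
    {F L : Type} [Fintype F] [Fintype L] [DecidableEq F] [DecidableEq L]
    (q : L → ℕ) (π : F → L → ℝ) (prefs : F → List L) (α zs : ℝ)
    (hq : ∑ j, q j = Fintype.card F)
    (hπ : ∀ i j, π i j ∈ Set.Icc (0 : ℝ) 1)
    (hα : α ∈ Set.Icc (0 : ℝ) 1)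
    (hzs : IsGreatest {x : ℝ | ∃ μ : F → L, feasible q μ ∧ x = z π μ} zs)
    (hprefs : ∀ i, (prefs i).Nodup ∧ ∀ j : L, j ∈ prefs i)
    (order : List F) (horder : order.Nodup) (hall : ∀ i : F, i ∈ order) :
    ∃ μ : F → L, (∀ i, crsdRun q π (α * zs) prefs order i = some (μ i)) ∧
      feasible q μ ∧ α * zs ≤ z π μ :=
  crsd_feasible_and_alpha_approx_general q π prefs α zs hπ hα hzs hprefs order hall
end

section
/- At every step of the CRSD mechanism's execution, there exists a feasible matching that extends the current partial matching and has government objective at least α·z*. In particular, the mechanism never leaves a family unmatched when families have complete preference orders. -/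
open Classical

lemma crsdStep_ne {F L : Type} [Fintype F] [DecidableEq F] [DecidableEq L]
    (q : L → ℕ) (π : F → L → ℝ) (c : ℝ) (prefs : F → List L)
    (p : F → Option L) (a i : F) (h : i ≠ a) :
    crsdStep q π c prefs p a i = p i := by
  unfold crsdStep
  cases hf : List.find? (fun j => decide (assignedCount p j < q j ∧
      okExt q π c (Function.update p a (some j)))) (prefs a) with
  | none => rfl
  | some j => exact Function.update_of_ne h _ _

lemma crsdRun_append {F L : Type} [Fintype F] [DecidableEq F] [DecidableEq L]
    (q : L → ℕ) (π : F → L → ℝ) (c : ℝ) (prefs : F → List L)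
    (pre : List F) (a : F) :
    crsdRun q π c prefs (pre ++ [a]) = crsdStep q π c prefs (crsdRun q π c prefs pre) a := by
  simp [crsdRun, List.foldl_append]

lemma crsdRun_notMem {F L : Type} [Fintype F] [DecidableEq F] [DecidableEq L]
    (q : L → ℕ) (π : F → L → ℝ) (c : ℝ) (prefs : F → List L)
    (pre : List F) (i : F) (h : i ∉ pre) :
    crsdRun q π c prefs pre i = none := by
  induction pre using List.reverseRecOn with
  | nil => rfl
  | append_singleton pre' a ih =>
    rw [crsdRun_append, crsdStep_ne]
    · exact ih (fun hm => h (List.mem_append_left _ hm))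
    · intro hi; exact h (by simp [hi])

/-- At every step of CRSD there is a feasible matching extending the current
partial matching with government objective at least `α * z*`; in particular, with complete
preference orders, every processed family is matched. -/
theorem crsd_invariant_and_no_unmatched
    {F L : Type} [Fintype F] [Fintype L] [DecidableEq F] [DecidableEq L]
    (q : L → ℕ) (π : F → L → ℝ) (prefs : F → List L) (α zs : ℝ)
    (hq : ∑ j, q j = Fintype.card F)
    (hπ : ∀ i j, π i j ∈ Set.Icc (0 : ℝ) 1)
    (hα : α ∈ Set.Icc (0 : ℝ) 1)
    (hzs : IsGreatest {x : ℝ | ∃ μ : F → L, feasible q μ ∧ x = z π μ} zs)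
    (hprefs : ∀ i, (prefs i).Nodup ∧ ∀ j : L, j ∈ prefs i)
    (order : List F) (horder : order.Nodup) :
    ∀ pre : List F, pre <+: order →
      okExt q π (α * zs) (crsdRun q π (α * zs) prefs pre) ∧
      ∀ i ∈ pre, crsdRun q π (α * zs) prefs pre i ≠ none := by
  set c := α * zs with hc
  -- basic facts about c
  obtain ⟨⟨μ₀, hμ₀feas, hμ₀z⟩, hub⟩ := hzs
  have hz0 : (0:ℝ) ≤ zs := by
    rw [hμ₀z]
    exact Finset.sum_nonneg fun i _ => (hπ i (μ₀ i)).1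
  have hczs : c ≤ zs := by
    rw [hc]
    calc α * zs ≤ 1 * zs := mul_le_mul_of_nonneg_right hα.2 hz0
    _ = zs := one_mul zs
  intro pre
  induction pre using List.reverseRecOn with
  | nil =>
    intro _
    refine ⟨⟨μ₀, hμ₀feas, ?_, hμ₀z ▸ hczs⟩, by simp⟩
    intro i j h
    simp [crsdRun] at h
  | append_singleton pre' a ih =>
    intro hpre
    have hpre' : pre' <+: order :=
      ((pre'.prefix_append [a]).trans hpre)
    obtain ⟨hOk, hAll⟩ := ih hpre'
    set p := crsdRun q π c prefs pre' with hp
    have hnd : (pre' ++ [a]).Nodup := horder.sublist hpre.sublist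
    have hanotin : a ∉ pre' := by
      have := hnd
      simp [List.nodup_append] at this
      tauto
    have hpa : p a = none := crsdRun_notMem q π c prefs pre' a hanotin
    -- the location μ' a works for the predicate
    obtain ⟨μ', hfeas, hext, hcz⟩ := hOk
    set j := μ' a with hj
    have hcount : assignedCount p j < q j := by
      have hsub : insert a (Finset.univ.filter (fun i => p i = some j)) ⊆
          Finset.univ.filter (fun i => μ' i = j) := by
        intro x hx
        simp only [Finset.mem_insert, Finset.mem_filter, Finset.mem_univ, true_and] at hx ⊢
        rcases hx with rfl | hx
        · exact hj.symm
        · exact hext x j hx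
      have hnotmem : a ∉ Finset.univ.filter (fun i => p i = some j) := by
        simp [hpa]
      have := Finset.card_le_card hsub
      rw [Finset.card_insert_of_notMem hnotmem, hfeas j] at this
      exact Nat.lt_of_succ_le this
    have hOkUpd : okExt q π c (Function.update p a (some j)) := by
      refine ⟨μ', hfeas, ?_, hcz⟩
      intro i' j' h
      by_cases hia : i' = a
      · subst hia
        rw [Function.update_self] at h
        rw [← Option.some_inj.mp h]
      · rw [Function.update_of_ne hia] at h
        exact hext i' j' h
    -- find? succeeds
    have hfind : ((prefs a).find? (fun j' =>
        decide (assignedCount p j' < q j' ∧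
          okExt q π c (Function.update p a (some j'))))).isSome := by
      rw [List.find?_isSome]
      exact ⟨j, (hprefs a).2 j, decide_eq_true ⟨hcount, hOkUpd⟩⟩
    obtain ⟨j', hj'⟩ := Option.isSome_iff_exists.mp hfind
    have hpred := List.find?_some hj'
    rw [decide_eq_true_eq] at hpred
    have hstep : crsdStep q π c prefs p a = Function.update p a (some j') := by
      unfold crsdStep
      rw [hj']
    rw [crsdRun_append, ← hp, hstep]
    refine ⟨hpred.2, ?_⟩
    intro i hi
    rcases List.mem_append.mp hi with hi' | hi'
    · have hia : i ≠ a := fun h => hanotin (h ▸ hi')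
      rw [Function.update_of_ne hia]
      exact hAll i hi'
    · have : i = a := by simpa using hi'
      subst this
      simp [Function.update_self]
end

section
/- The CRSD mechanism is family-strategyproof: for every family i, every profile of preference orders of the other families, every random order of the families, and every preference order that i could misreport, the location that i receives when reporting its true preference order is weakly preferred (according to i's true preference order) to the location it receives under any misreport. -/
open Classical

/-!
When family `i`'s turn comes, the partial matching is produced by the families before it, whose
steps do not look at `i`'s report, and which locations are available to `i` depends only on that
partial matching. So `i` receives the first available location of whatever list it reports, and
no later step changes its assignment; truthfully, that is the available location `i` ranks
highest, and a misreport can only yield another available location.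
-/

theorem List.idxOf_le_idxOf_of_find?_eq_some {α : Type} [DecidableEq α] {p : α → Bool}
    {l : List α} {a b : α} (ha : l.find? p = some a) (hpb : p b = true) :
    l.idxOf a ≤ l.idxOf b := by
  obtain ⟨hpa, as, bs, rfl, has⟩ := List.find?_eq_some_iff_append.mp ha
  have not_mem_prefix : ∀ x, p x = true → x ∉ as := fun x hx hmem => by
    simpa [hx] using has x hmem
  rw [List.idxOf_append_of_notMem (not_mem_prefix a hpa),
    List.idxOf_append_of_notMem (not_mem_prefix b hpb)]
  simp

section CRSD

variable {F L : Type} [Fintype F] [DecidableEq F] [DecidableEq L]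
  (q : L → ℕ) (π : F → L → ℝ) (c : ℝ)

noncomputable def crsdAvailable (p : F → Option L) (i : F) (j : L) : Bool :=
  decide (assignedCount p j < q j ∧ okExt q π c (Function.update p i (some j)))

theorem crsdStep_apply_self (prefs : F → List L) (p : F → Option L) (i : F) :
    crsdStep q π c prefs p i i =
      ((prefs i).find? (crsdAvailable q π c p i)).or (p i) := by
  unfold crsdStep crsdAvailable
  cases (prefs i).find? fun j =>
    decide (assignedCount p j < q j ∧ okExt q π c (Function.update p i (some j))) <;> simp

theorem crsdStep_apply_of_ne (prefs : F → List L) (p : F → Option L) {k i : F} (hki : k ≠ i) :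
    crsdStep q π c prefs p k i = p i := by
  unfold crsdStep
  cases (prefs k).find? fun j =>
    decide (assignedCount p j < q j ∧ okExt q π c (Function.update p k (some j)))
  · rfl
  · exact Function.update_of_ne hki.symm _ _

theorem foldl_crsdStep_apply_of_not_mem (prefs : F → List L) {i : F} :
    ∀ {l : List F} (p : F → Option L), i ∉ l → l.foldl (crsdStep q π c prefs) p i = p i
  | [], _, _ => rfl
  | k :: ks, p, hi => by
    rw [List.mem_cons, not_or] at hi
    rw [List.foldl_cons, foldl_crsdStep_apply_of_not_mem prefs _ hi.2,
      crsdStep_apply_of_ne q π c prefs p (Ne.symm hi.1)]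

theorem foldl_crsdStep_congr {prefs prefs' : F → List L} :
    ∀ {l : List F} (p : F → Option L), (∀ k ∈ l, prefs k = prefs' k) →
      l.foldl (crsdStep q π c prefs) p = l.foldl (crsdStep q π c prefs') p
  | [], _, _ => rfl
  | k :: ks, p, h => by
    have hk : crsdStep q π c prefs p k = crsdStep q π c prefs' p k := by
      unfold crsdStep; rw [h k List.mem_cons_self]
    rw [List.foldl_cons, List.foldl_cons, hk]
    exact foldl_crsdStep_congr _ fun k' hk' => h k' (List.mem_cons_of_mem _ hk')

theorem crsdRun_congr {prefs prefs' : F → List L} {l : List F}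
    (h : ∀ k ∈ l, prefs k = prefs' k) :
    crsdRun q π c prefs l = crsdRun q π c prefs' l :=
  foldl_crsdStep_congr q π c _ h

theorem crsdRun_append_cons_apply_self (prefs : F → List L) {l₁ l₂ : List F} {i : F}
    (h₁ : i ∉ l₁) (h₂ : i ∉ l₂) :
    crsdRun q π c prefs (l₁ ++ i :: l₂) i =
      (prefs i).find? (crsdAvailable q π c (crsdRun q π c prefs l₁) i) := by
  have hpi : crsdRun q π c prefs l₁ i = none :=
    foldl_crsdStep_apply_of_not_mem q π c prefs _ h₁
  rw [crsdRun, List.foldl_append, List.foldl_cons, foldl_crsdStep_apply_of_not_mem _ _ _ _ _ h₂,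
    ← crsdRun, crsdStep_apply_self, hpi, Option.or_none]

end CRSD

theorem crsd_family_strategyproof_general
    {F L : Type} [Fintype F] [DecidableEq F] [DecidableEq L]
    (q : L → ℕ) (π : F → L → ℝ) (prefs : F → List L) (α zs : ℝ)
    (order : List F) (horder : order.Nodup) (hall : ∀ i : F, i ∈ order)
    (i : F) (lie : List L)
    (jTrue jLie : L)
    (hTrue : crsdRun q π (α * zs) prefs order i = some jTrue)
    (hLie : crsdRun q π (α * zs) (Function.update prefs i lie) order i = some jLie) :
    (prefs i).idxOf jTrue ≤ (prefs i).idxOf jLie := by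
  obtain ⟨l₁, l₂, rfl⟩ := List.append_of_mem (hall i)
  have hi : i ∉ l₁ ∧ i ∉ l₂ := by
    simpa using (List.nodup_cons.mp (List.nodup_middle.mp horder)).1
  have same_state : crsdRun q π (α * zs) (Function.update prefs i lie) l₁ =
      crsdRun q π (α * zs) prefs l₁ :=
    crsdRun_congr q π _ fun k hk => Function.update_of_ne (ne_of_mem_of_not_mem hk hi.1) _ _
  rw [crsdRun_append_cons_apply_self _ _ _ _ hi.1 hi.2] at hTrue hLie
  rw [same_state, Function.update_self] at hLie
  exact List.idxOf_le_idxOf_of_find?_eq_some hTrue (List.find?_some hLie)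

/-- CRSD is family-strategyproof: for every family `i`, every profile of the
others' preferences, every order of families, and every (complete) misreport, the location
received when reporting truthfully is weakly preferred (w.r.t. `i`'s true order) to the
location received under the misreport. -/
theorem crsd_family_strategyproof
    {F L : Type} [Fintype F] [Fintype L] [DecidableEq F] [DecidableEq L]
    (q : L → ℕ) (π : F → L → ℝ) (prefs : F → List L) (α zs : ℝ)
    (hq : ∑ j, q j = Fintype.card F)
    (hπ : ∀ i j, π i j ∈ Set.Icc (0 : ℝ) 1)
    (hα : α ∈ Set.Icc (0 : ℝ) 1)
    (hzs : IsGreatest {x : ℝ | ∃ μ : F → L, feasible q μ ∧ x = z π μ} zs)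
    (hprefs : ∀ i, (prefs i).Nodup ∧ ∀ j : L, j ∈ prefs i)
    (order : List F) (horder : order.Nodup) (hall : ∀ i : F, i ∈ order)
    (i : F) (lie : List L) (hlie : lie.Nodup ∧ ∀ j : L, j ∈ lie)
    (jTrue jLie : L)
    (hTrue : crsdRun q π (α * zs) prefs order i = some jTrue)
    (hLie : crsdRun q π (α * zs) (Function.update prefs i lie) order i = some jLie) :
    (prefs i).idxOf jTrue ≤ (prefs i).idxOf jLie :=
  crsd_family_strategyproof_general q π prefs α zs order horder hall i lie jTrue jLie hTrue hLie
end

section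
/- In the Knapsack-to-CMRV reduction, a matching μ is a feasible solution of the constructed CMRV instance (i.e., satisfies the capacity constraints and the government-objective lower bound γ) if and only if the induced Knapsack solution x[μ] satisfies Σ_{i=1}^n a_i x[μ]_i ≤ b. -/
/-- Families of the reduction: `inl i` is `fᵢ`, `inr i` is `f̄ᵢ`. -/
abbrev Fam (n : ℕ) := Fin n ⊕ Fin n

/-- Locations of the reduction: `inl j` is `ℓⱼ`, `inr j` is `ℓ̄ⱼ`. -/
abbrev Loc (n : ℕ) := Fin n ⊕ Fin n

/-- Employment probabilities of the constructed CMRV instance. -/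
noncomputable def piR (n : ℕ) (a : Fin n → ℝ) : Fam n → Loc n → ℝ
  | Sum.inl i, Sum.inl j => if i = j then 1 / (4 * n) else 0
  | Sum.inl i, Sum.inr j => if i = j then a i + 1 / (4 * n) else 0
  | Sum.inr i, Sum.inl j => if i = j then 1 / (4 * n) else 0
  | Sum.inr i, Sum.inr j => if i = j then 1 / (4 * n) else 0

/-- The lower bound `γ = (2n+1)/(4n) − b` of the constructed CMRV instance. -/
noncomputable def gam (n : ℕ) (b : ℝ) : ℝ := (2 * n + 1) / (4 * n) - b

/-- The induced Knapsack solution: `x[μ]ᵢ = 1` iff `μ(fᵢ) = ℓᵢ` (as a real indicator). -/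
noncomputable def xInd {n : ℕ} (μ : Fam n → Loc n) (i : Fin n) : ℝ :=
  if μ (Sum.inl i) = Sum.inl i then 1 else 0

/-- Ranks of the constructed preference orders: `fᵢ` ranks `ℓⱼ` at position `j` and `ℓ̄ⱼ`
at position `n + j`; `f̄ᵢ` is symmetric. -/
def rankR (n : ℕ) : Fam n → Loc n → ℕ
  | Sum.inl _, Sum.inl j => (j : ℕ) + 1
  | Sum.inl _, Sum.inr j => n + (j : ℕ) + 1
  | Sum.inr _, Sum.inl j => n + (j : ℕ) + 1
  | Sum.inr _, Sum.inr j => (j : ℕ) + 1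

/-- The rank value function of the reduction: `v(k) = w_k / 2` for `1 ≤ k ≤ n`, else `0`. -/
noncomputable def vR (n : ℕ) (w : Fin n → ℝ) (k : ℕ) : ℝ :=
  if h : 1 ≤ k ∧ k ≤ n then w ⟨k - 1, by omega⟩ / 2 else 0

/-- In the Knapsack-to-CMRV reduction, a quota-respecting matching (pairing
each `fᵢ`, `f̄ᵢ` within `{ℓᵢ, ℓ̄ᵢ}`, as every feasible matching must) satisfies the
government-objective lower bound `γ` if and only if the induced Knapsack solution satisfies
`Σ aᵢ x[μ]ᵢ ≤ b`. -/
theorem reduction_feasibility_iff_knapsack_feasible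
    (n : ℕ) (hn : 0 < n) (a : Fin n → ℝ) (b : ℝ)
    (ha : ∀ i, 0 ≤ a i) (hsum : ∑ i, a i = 1 / (4 * n))
    (hb0 : 0 ≤ b) (hb : b < 1 / (4 * n))
    (μ : Fam n → Loc n) (hfeas : feasible (fun _ => 1) μ)
    (hpair1 : ∀ i : Fin n, μ (Sum.inl i) = Sum.inl i ∨ μ (Sum.inl i) = Sum.inr i)
    (hpair2 : ∀ i : Fin n, μ (Sum.inr i) = Sum.inl i ∨ μ (Sum.inr i) = Sum.inr i) :
    gam n b ≤ z (piR n a) μ ↔ ∑ i, a i * xInd μ i ≤ b := by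
  have hnR : (0:ℝ) < n := by exact_mod_cast hn
  have hz : z (piR n a) μ = 1/2 + 1/(4*n) - ∑ i, a i * xInd μ i := by
    unfold z
    rw [Fintype.sum_sum_type]
    have h1 : ∀ i, piR n a (Sum.inl i) (μ (Sum.inl i))
        = 1/(4*n) + (a i - a i * xInd μ i) := by
      intro i
      rcases hpair1 i with h | h <;> simp [h, piR, xInd] <;> ring
    have h2 : ∀ i, piR n a (Sum.inr i) (μ (Sum.inr i)) = 1/(4*n) := by
      intro i
      rcases hpair2 i with h | h <;> simp [h, piR]
    simp only [h1, h2, Finset.sum_add_distrib, Finset.sum_sub_distrib,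
      Finset.sum_const, Finset.card_univ, Fintype.card_fin, nsmul_eq_mul, hsum]
    field_simp
    ring
  rw [hz]
  unfold gam
  have : (2 * (n:ℝ) + 1) / (4 * n) = 1/2 + 1/(4*n) := by field_simp; ring
  rw [this]
  constructor <;> intro h <;> linarith
end

section
/- In the Knapsack-to-CMRV reduction, for every feasible matching μ of the constructed instance it holds that μ(f_i) = ℓ_i if and only if μ(f̄_i) = ℓ̄_i, for each i ∈ {1,...,n}. -/
/-- In the Knapsack-to-CMRV reduction, every feasible matching pairs each
family within `{ℓᵢ, ℓ̄ᵢ}`, and `μ(fᵢ) = ℓᵢ` if and only if `μ(f̄ᵢ) = ℓ̄ᵢ`. -/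
theorem reduction_pairing
    (n : ℕ) (hn : 0 < n) (a : Fin n → ℝ) (b : ℝ)
    (ha : ∀ i, 0 ≤ a i) (hsum : ∑ i, a i = 1 / (4 * n))
    (hb0 : 0 ≤ b) (hb : b < 1 / (4 * n))
    (μ : Fam n → Loc n) (hfeas : feasible (fun _ => 1) μ)
    (hγ : gam n b ≤ z (piR n a) μ) :
    ∀ i : Fin n,
      (μ (Sum.inl i) = Sum.inl i ∨ μ (Sum.inl i) = Sum.inr i) ∧
      (μ (Sum.inr i) = Sum.inl i ∨ μ (Sum.inr i) = Sum.inr i) ∧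
      (μ (Sum.inl i) = Sum.inl i ↔ μ (Sum.inr i) = Sum.inr i) := by

  classical
  have hN : (0:ℝ) < 4 * n := by positivity
  set M : Fam n → ℝ := fun f => match f with
    | Sum.inl i => a i + 1 / (4 * n)
    | Sum.inr _ => 1 / (4 * n) with hMdef
  have hMpos : ∀ f, 1 / (4 * (n:ℝ)) ≤ M f := by
    intro f; cases f with
    | inl i => simp only [hMdef]; linarith [ha i]
    | inr i => simp only [hMdef]; exact le_refl _
  have hle : ∀ f, piR n a f (μ f) ≤ M f := by
    intro f
    have h1 : (0:ℝ) ≤ 1 / (4 * n) := by positivity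
    cases f with
    | inl i =>
      cases h : μ (Sum.inl i) with
      | inl j => simp only [piR, hMdef]; split_ifs <;> linarith [ha i]
      | inr j => simp only [piR, hMdef]; split_ifs <;> linarith [ha i]
    | inr i =>
      cases h : μ (Sum.inr i) with
      | inl j => simp only [piR, hMdef]; split_ifs <;> linarith
      | inr j => simp only [piR, hMdef]; split_ifs <;> linarith
  have hsumM : ∑ f, M f = (2 * n + 1) / (4 * n) := by
    rw [Fintype.sum_sum_type]
    simp only [hMdef]
    rw [Finset.sum_add_distrib, hsum]
    simp only [Finset.sum_const, Finset.card_univ, Fintype.card_fin, nsmul_eq_mul]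
    field_simp; ring
  -- Step 1: every family is matched within its pair
  set idx : Fam n → Fin n := Sum.elim id id with hidx
  have matched : ∀ f : Fam n,
      μ f = Sum.inl (idx f) ∨ μ f = Sum.inr (idx f) := by
    intro f
    by_contra hcon
    push_neg at hcon
    obtain ⟨h1, h2⟩ := hcon
    have hzero : piR n a f (μ f) = 0 := by
      cases f with
      | inl i =>
        cases h : μ (Sum.inl i) with
        | inl j =>
          have : i ≠ j := by rintro rfl; exact h1 (by simpa [hidx] using h)
          simp [piR, this]
        | inr j =>
          have : i ≠ j := by rintro rfl; exact h2 (by simpa [hidx] using h)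
          simp [piR, this]
      | inr i =>
        cases h : μ (Sum.inr i) with
        | inl j =>
          have : i ≠ j := by rintro rfl; exact h1 (by simpa [hidx] using h)
          simp [piR, this]
        | inr j =>
          have : i ≠ j := by rintro rfl; exact h2 (by simpa [hidx] using h)
          simp [piR, this]
    have hzle : z (piR n a) μ ≤ ∑ f, M f - M f := by
      have e1 : z (piR n a) μ =
          ∑ g ∈ Finset.univ.erase f, piR n a g (μ g) := by
        unfold z
        rw [← Finset.add_sum_erase _ _ (Finset.mem_univ f), hzero, zero_add]
      have e2 : ∑ g ∈ Finset.univ.erase f, M g = ∑ g, M g - M f := by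
        rw [← Finset.add_sum_erase _ M (Finset.mem_univ f)]; ring
      rw [e1, ← e2]
      exact Finset.sum_le_sum fun g _ => hle g
    have : z (piR n a) μ ≤ (2 * n + 1) / (4 * n) - 1 / (4 * n) := by
      have := hMpos f
      rw [hsumM] at hzle; linarith
    have hγ' : (2 * n + 1) / (4 * n) - b ≤ z (piR n a) μ := hγ
    linarith
  -- Step 2
  intro i
  have A := matched (Sum.inl i)
  have B := matched (Sum.inr i)
  simp only [hidx, Sum.elim_inl, Sum.elim_inr, id] at A B
  refine ⟨A, B, ?_, ?_⟩
  · intro h1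
    rcases B with h2 | h2
    · exfalso
      have hcard := hfeas (Sum.inl i)
      simp only at hcard
      have hsub : ({Sum.inl i, Sum.inr i} : Finset (Fam n)) ⊆
          Finset.univ.filter (fun g => μ g = Sum.inl i) := by
        intro g hg
        simp only [Finset.mem_insert, Finset.mem_singleton] at hg
        rcases hg with rfl | rfl <;> simp [h1, h2]
      have h2le : 2 ≤ (Finset.univ.filter (fun g => μ g = Sum.inl i)).card := by
        calc 2 = ({Sum.inl i, Sum.inr i} : Finset (Fam n)).card := by
              rw [Finset.card_pair (by simp)]
          _ ≤ _ := Finset.card_le_card hsub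
      omega
    · exact h2
  · intro h2
    rcases A with h1 | h1
    · exact h1
    · exfalso
      have hcard := hfeas (Sum.inr i)
      simp only at hcard
      have hsub : ({Sum.inl i, Sum.inr i} : Finset (Fam n)) ⊆
          Finset.univ.filter (fun g => μ g = Sum.inr i) := by
        intro g hg
        simp only [Finset.mem_insert, Finset.mem_singleton] at hg
        rcases hg with rfl | rfl <;> simp [h1, h2]
      have h2le : 2 ≤ (Finset.univ.filter (fun g => μ g = Sum.inr i)).card := by
        calc 2 = ({Sum.inl i, Sum.inr i} : Finset (Fam n)).card := by
              rw [Finset.card_pair (by simp)]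
          _ ≤ _ := Finset.card_le_card hsub
      omega
end

section
/- In the Knapsack-to-CMRV reduction, the rank-value objective of any feasible matching μ equals the Knapsack value of the induced solution: Σ_{i∈F} v(≽_{i,μ(i)}) = Σ_{i=1}^n w_i x[μ]_i. Consequently, an optimal feasible matching of the CMRV instance induces an optimal Knapsack solution. -/
lemma vR_low {n : ℕ} (w : Fin n → ℝ) (i : Fin n) : vR n w ((i:ℕ)+1) = w i / 2 := by
  have h : 1 ≤ (i:ℕ)+1 ∧ (i:ℕ)+1 ≤ n := ⟨Nat.le_add_left _ _, i.isLt⟩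
  simp only [vR, dif_pos h]
  congr 1

lemma vR_high {n : ℕ} (w : Fin n → ℝ) (k : ℕ) (hk : n < k) : vR n w k = 0 := by
  have : ¬ (1 ≤ k ∧ k ≤ n) := by omega
  simp only [vR, dif_neg this]

/-- pair-form sum computation -/
lemma sum_vR_pair (n : ℕ) (w : Fin n → ℝ) (μ : Fam n → Loc n)
    (h : ∀ i : Fin n, (μ (Sum.inl i) = Sum.inl i ∧ μ (Sum.inr i) = Sum.inr i) ∨
                      (μ (Sum.inl i) = Sum.inr i ∧ μ (Sum.inr i) = Sum.inl i)) :
    (∑ i : Fam n, vR n w (rankR n i (μ i)))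
      = ∑ i, w i * (if μ (Sum.inl i) = Sum.inl i then (1:ℝ) else 0) := by
  rw [Fintype.sum_sum_type, ← Finset.sum_add_distrib]
  refine Finset.sum_congr rfl (fun i _ => ?_)
  rcases h i with ⟨h1, h2⟩ | ⟨h1, h2⟩
  · rw [h1, h2]
    simp [rankR, vR_low]
  · rw [h1, h2]
    have : (Sum.inr i : Loc n) ≠ Sum.inl i := by simp
    simp only [rankR, vR_high w _ (by omega : n < n + (i:ℕ) + 1), h1, if_neg this]
    ring

/-- pair-form feasibility -/
lemma feasible_pair (n : ℕ) (μ : Fam n → Loc n)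
    (h : ∀ i : Fin n, (μ (Sum.inl i) = Sum.inl i ∧ μ (Sum.inr i) = Sum.inr i) ∨
                      (μ (Sum.inl i) = Sum.inr i ∧ μ (Sum.inr i) = Sum.inl i)) :
    feasible (fun _ => 1) μ := by
  have hmem : ∀ f : Fam n, ∀ j : Fin n,
      (μ f = Sum.inl j ∨ μ f = Sum.inr j) → (f = Sum.inl j ∨ f = Sum.inr j) := by
    rintro (k | k) j hf <;> rcases h k with ⟨h1, h2⟩ | ⟨h1, h2⟩ <;>
      simp_all
  intro j
  rw [Finset.card_eq_one]
  rcases j with j | j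
  · rcases h j with ⟨h1, h2⟩ | ⟨h1, h2⟩
    · refine ⟨Sum.inl j, ?_⟩
      ext f
      simp only [Finset.mem_filter, Finset.mem_univ, true_and, Finset.mem_singleton]
      constructor
      · intro hf
        rcases hmem f j (Or.inl hf) with rfl | rfl
        · rfl
        · rw [h2] at hf; simp at hf
      · rintro rfl; exact h1
    · refine ⟨Sum.inr j, ?_⟩
      ext f
      simp only [Finset.mem_filter, Finset.mem_univ, true_and, Finset.mem_singleton]
      constructor
      · intro hf
        rcases hmem f j (Or.inl hf) with rfl | rfl
        · rw [h1] at hf; simp at hf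
        · rfl
      · rintro rfl; exact h2
  · rcases h j with ⟨h1, h2⟩ | ⟨h1, h2⟩
    · refine ⟨Sum.inr j, ?_⟩
      ext f
      simp only [Finset.mem_filter, Finset.mem_univ, true_and, Finset.mem_singleton]
      constructor
      · intro hf
        rcases hmem f j (Or.inr hf) with rfl | rfl
        · rw [h1] at hf; simp at hf
        · rfl
      · rintro rfl; exact h2
    · refine ⟨Sum.inl j, ?_⟩
      ext f
      simp only [Finset.mem_filter, Finset.mem_univ, true_and, Finset.mem_singleton]
      constructor
      · intro hf
        rcases hmem f j (Or.inr hf) with rfl | rfl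
        · rfl
        · rw [h2] at hf; simp at hf
      · rintro rfl; exact h1

/-- bound function -/
noncomputable def gR (n : ℕ) (a : Fin n → ℝ) : Fam n → ℝ
  | Sum.inl i => a i + 1 / (4 * n)
  | Sum.inr _ => 1 / (4 * n)

lemma piR_le (n : ℕ) (a : Fin n → ℝ) (ha : ∀ i, 0 ≤ a i) (hn : 0 < n)
    (f : Fam n) (l : Loc n) : piR n a f l ≤ gR n a f := by
  have h0 : (0:ℝ) ≤ 1 / (4 * n) := by positivity
  rcases f with i | i <;> rcases l with j | j <;>
    simp only [piR, gR] <;> split_ifs <;> first | linarith [ha i] | linarith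

lemma sum_gR (n : ℕ) (a : Fin n → ℝ) (hsum : ∑ i, a i = 1 / (4 * n)) :
    ∑ f : Fam n, gR n a f = 1 / (4 * n) + (n:ℝ) * (1 / (4 * n)) + (n:ℝ) * (1 / (4 * n)) := by
  rw [Fintype.sum_sum_type]
  simp only [gR, Finset.sum_add_distrib, hsum, Finset.sum_const, Finset.card_univ,
    Fintype.card_fin, nsmul_eq_mul]

lemma gR_ge (n : ℕ) (a : Fin n → ℝ) (ha : ∀ i, 0 ≤ a i) (f : Fam n) :
    1 / (4 * n) ≤ gR n a f := by
  rcases f with i | i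
  · simp only [gR]; linarith [ha i]
  · simp only [gR]; exact le_refl _

lemma struct (n : ℕ) (hn : 0 < n) (a : Fin n → ℝ) (b : ℝ) (ha : ∀ i, 0 ≤ a i)
    (hsum : ∑ i, a i = 1 / (4 * n)) (hb : b < 1 / (4 * n))
    (μ : Fam n → Loc n) (hγ : gam n b ≤ z (piR n a) μ) :
    ∀ i : Fin n, (μ (Sum.inl i) = Sum.inl i ∨ μ (Sum.inl i) = Sum.inr i) ∧
                 (μ (Sum.inr i) = Sum.inl i ∨ μ (Sum.inr i) = Sum.inr i) := by
  by_contra hcon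
  push_neg at hcon
  obtain ⟨i, hi⟩ := hcon
  have key : ∃ f0 : Fam n, piR n a f0 (μ f0) = 0 := by
    by_cases hA : μ (Sum.inl i) = Sum.inl i ∨ μ (Sum.inl i) = Sum.inr i
    · have hB := hi hA
      refine ⟨Sum.inr i, ?_⟩
      rcases hm : μ (Sum.inr i) with j | j <;> simp only [piR] <;> rw [if_neg]
      · intro hij; exact hB.1 (by rw [hm, hij])
      · intro hij; exact hB.2 (by rw [hm, hij])
    · push_neg at hA
      refine ⟨Sum.inl i, ?_⟩
      rcases hm : μ (Sum.inl i) with j | j <;> simp only [piR] <;> rw [if_neg]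
      · intro hij; exact hA.1 (by rw [hm, hij])
      · intro hij; exact hA.2 (by rw [hm, hij])
  obtain ⟨f0, hf0⟩ := key
  have hz : z (piR n a) μ =
      piR n a f0 (μ f0) + ∑ f ∈ Finset.univ.erase f0, piR n a f (μ f) :=
    (Finset.add_sum_erase _ _ (Finset.mem_univ f0)).symm
  have hle : ∑ f ∈ Finset.univ.erase f0, piR n a f (μ f)
      ≤ ∑ f ∈ Finset.univ.erase f0, gR n a f :=
    Finset.sum_le_sum (fun f _ => piR_le n a ha hn f (μ f))
  have herase : ∑ f ∈ Finset.univ.erase f0, gR n a f = (∑ f : Fam n, gR n a f) - gR n a f0 := by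
    rw [← Finset.add_sum_erase _ _ (Finset.mem_univ f0)]; ring
  have hg := gR_ge n a ha f0
  have hsg := sum_gR n a hsum
  have hn' : (0:ℝ) < (n:ℝ) := by exact_mod_cast hn
  have hgam : gam n b = (2 * n + 1) / (4 * n) - b := rfl
  have heq : (2 * (n:ℝ) + 1) / (4 * n) = 1 / (4 * n) + (n:ℝ) * (1 / (4 * n)) + (n:ℝ) * (1 / (4 * n)) := by
    field_simp
    ring
  have : z (piR n a) μ ≤ (2 * (n:ℝ) + 1) / (4 * n) - 1 / (4 * n) := by
    rw [hz, hf0, heq]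
    linarith [hle, herase, hg, hsg]
  rw [hgam] at hγ
  linarith

lemma pair_of_feasible (n : ℕ) (μ : Fam n → Loc n)
    (hst : ∀ i : Fin n, (μ (Sum.inl i) = Sum.inl i ∨ μ (Sum.inl i) = Sum.inr i) ∧
                        (μ (Sum.inr i) = Sum.inl i ∨ μ (Sum.inr i) = Sum.inr i))
    (hfeas : feasible (fun _ => 1) μ) :
    ∀ i : Fin n, (μ (Sum.inl i) = Sum.inl i ∧ μ (Sum.inr i) = Sum.inr i) ∨
                 (μ (Sum.inl i) = Sum.inr i ∧ μ (Sum.inr i) = Sum.inl i) := by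
  intro i
  rcases (hst i).1 with h1 | h1
  · left
    refine ⟨h1, ?_⟩
    rcases (hst i).2 with h2 | h2
    · exfalso
      have hsub : ({Sum.inl i, Sum.inr i} : Finset (Fam n)) ⊆
          Finset.univ.filter (fun f => μ f = Sum.inl i) := by
        intro f hf
        simp only [Finset.mem_insert, Finset.mem_singleton] at hf
        rcases hf with rfl | rfl <;> simp [h1, h2]
      have h2le : 2 ≤ (Finset.univ.filter (fun f => μ f = Sum.inl i)).card := by
        calc 2 = ({Sum.inl i, Sum.inr i} : Finset (Fam n)).card := by simp
          _ ≤ _ := Finset.card_le_card hsub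
      have hcard := hfeas (Sum.inl i)
      simp only at hcard
      omega
    · exact h2
  · right
    refine ⟨h1, ?_⟩
    rcases (hst i).2 with h2 | h2
    · exact h2
    · exfalso
      have hempty : Finset.univ.filter (fun f => μ f = Sum.inl i) = ∅ := by
        ext f
        simp only [Finset.mem_filter, Finset.mem_univ, true_and, Finset.notMem_empty,
          iff_false]
        intro hf
        rcases f with k | k
        · rcases (hst k).1 with hk | hk
          · rw [hk] at hf
            obtain rfl : k = i := Sum.inl.inj hf
            rw [hf] at hk
            exact (Sum.inl_ne_inr (hk.symm.trans h1)).elim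
          · rw [hk] at hf; exact (Sum.inr_ne_inl hf).elim
        · rcases (hst k).2 with hk | hk
          · rw [hk] at hf
            obtain rfl : k = i := Sum.inl.inj hf
            rw [hf] at hk
            exact (Sum.inl_ne_inr (hk.symm.trans h2)).elim
          · rw [hk] at hf; exact (Sum.inr_ne_inl hf).elim
      have := hfeas (Sum.inl i)
      rw [hempty] at this
      simp at this

/-- In the Knapsack-to-CMRV reduction, the rank-value objective of any feasible
matching equals the Knapsack value of the induced solution; consequently, an optimal
feasible matching of the CMRV instance induces an optimal Knapsack solution. -/
theorem reduction_objective_correspondence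
    (n : ℕ) (hn : 0 < n) (w a : Fin n → ℝ) (b : ℝ)
    (hw0 : ∀ i, 0 ≤ w i) (hwsorted : ∀ i j : Fin n, i ≤ j → w j ≤ w i)
    (ha : ∀ i, 0 ≤ a i) (hsum : ∑ i, a i = 1 / (4 * n))
    (hb0 : 0 ≤ b) (hb : b < 1 / (4 * n))
    (μ : Fam n → Loc n) (hfeas : feasible (fun _ => 1) μ)
    (hγ : gam n b ≤ z (piR n a) μ) :
    (∑ i : Fam n, vR n w (rankR n i (μ i))) = ∑ i, w i * xInd μ i ∧
    -- consequently, if μ is an optimal feasible matching, x[μ] is an optimal Knapsack solution: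
    ((∀ μ' : Fam n → Loc n, feasible (fun _ => 1) μ' → gam n b ≤ z (piR n a) μ' →
        (∑ i : Fam n, vR n w (rankR n i (μ' i))) ≤ ∑ i : Fam n, vR n w (rankR n i (μ i))) →
      ∀ x : Fin n → Bool,
        (∑ i, a i * (if x i then (1:ℝ) else 0)) ≤ b →
        (∑ i, w i * (if x i then (1:ℝ) else 0)) ≤ ∑ i, w i * xInd μ i) := by
  have hpair := pair_of_feasible n μ (struct n hn a b ha hsum hb μ hγ) hfeas
  have hmain : (∑ i : Fam n, vR n w (rankR n i (μ i))) = ∑ i, w i * xInd μ i := by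
    rw [sum_vR_pair n w μ hpair]
    rfl
  refine ⟨hmain, ?_⟩
  intro hopt x hx
  set μ' : Fam n → Loc n := Sum.elim
    (fun i => if x i then Sum.inl i else Sum.inr i)
    (fun i => if x i then Sum.inr i else Sum.inl i) with hμ'
  have hpair' : ∀ i : Fin n, (μ' (Sum.inl i) = Sum.inl i ∧ μ' (Sum.inr i) = Sum.inr i) ∨
      (μ' (Sum.inl i) = Sum.inr i ∧ μ' (Sum.inr i) = Sum.inl i) := by
    intro i
    cases hxi : x i <;> simp [hμ', hxi]
  have hfeas' : feasible (fun _ => 1) μ' := feasible_pair n μ' hpair'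
  have hn' : (0:ℝ) < (n:ℝ) := by exact_mod_cast hn
  have hz' : z (piR n a) μ' = 1 / (4 * n) + (n:ℝ) * (1 / (4 * n)) + (n:ℝ) * (1 / (4 * n))
      - ∑ i, a i * (if x i then (1:ℝ) else 0) := by
    unfold z
    rw [Fintype.sum_sum_type]
    have h1 : ∀ i : Fin n, piR n a (Sum.inl i) (μ' (Sum.inl i))
        = a i + 1 / (4 * n) - a i * (if x i then (1:ℝ) else 0) := by
      intro i
      cases hxi : x i <;> simp [hμ', hxi, piR] <;> ring
    have h2 : ∀ i : Fin n, piR n a (Sum.inr i) (μ' (Sum.inr i)) = 1 / (4 * n) := by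
      intro i
      cases hxi : x i <;> simp [hμ', hxi, piR]
    rw [Finset.sum_congr rfl (fun i _ => h1 i), Finset.sum_congr rfl (fun i _ => h2 i)]
    simp only [Finset.sum_sub_distrib, Finset.sum_add_distrib, hsum, Finset.sum_const,
      Finset.card_univ, Fintype.card_fin, nsmul_eq_mul]
    ring
  have hgam' : gam n b ≤ z (piR n a) μ' := by
    have heq : (2 * (n:ℝ) + 1) / (4 * n)
        = 1 / (4 * n) + (n:ℝ) * (1 / (4 * n)) + (n:ℝ) * (1 / (4 * n)) := by
      field_simp; ring
    have : gam n b = (2 * (n:ℝ) + 1) / (4 * n) - b := rfl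
    rw [this, heq, hz']
    linarith
  have hle := hopt μ' hfeas' hgam'
  rw [sum_vR_pair n w μ' hpair'] at hle
  have hiff : ∀ i : Fin n, (if μ' (Sum.inl i) = Sum.inl i then (1:ℝ) else 0)
      = (if x i then (1:ℝ) else 0) := by
    intro i
    cases hxi : x i <;> simp [hμ', hxi]
  rw [Finset.sum_congr rfl (fun i _ => by rw [hiff i])] at hle
  rw [hmain] at hle
  exact hle
end

section
/- Any matching μ induced by an optimal solution of the integer program IP-RV with γ = α·z* is a feasible matching, is an α-approximation of the government-optimal matching, and maximizes the rank-value welfare Σ_{i∈F} v(≽_{i,μ(i)}) among all feasible matchings μ' with z(μ') ≥ α·z*. -/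
/-- Rank of location `j` in the preference list of family `i` (1-based). -/
def rankOf {F L : Type} [DecidableEq L] (prefs : F → List L) (i : F) (j : L) : ℕ :=
  (prefs i).idxOf j + 1

/-- Rank-value welfare of a matching. -/
def welfare {F L : Type} [Fintype F] [DecidableEq L] (v : ℕ → ℝ) (prefs : F → List L)
    (μ : F → L) : ℝ :=
  ∑ i, v (rankOf prefs i (μ i))

/-! A matching `μ` and a binary assignment matrix with row sums `1` determine each other; the
theorem transports the constraints and both objectives of IP-RV along this correspondence. -/

section MatchingMatrix

variable {F L : Type} [DecidableEq L]

def matchingMatrix (μ : F → L) (i : F) (j : L) : ℕ :=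
  if μ i = j then 1 else 0

theorem matchingMatrix_eq_zero_or_eq_one (μ : F → L) (i : F) (j : L) :
    matchingMatrix μ i j = 0 ∨ matchingMatrix μ i j = 1 := by
  unfold matchingMatrix
  split_ifs <;> simp

theorem sum_matchingMatrix_row [Fintype L] (μ : F → L) (i : F) :
    ∑ j, matchingMatrix μ i j = 1 := by
  simp [matchingMatrix]

theorem sum_matchingMatrix_col [Fintype F] (μ : F → L) (j : L) :
    ∑ i, matchingMatrix μ i j = (Finset.univ.filter (fun i => μ i = j)).card := by
  simp only [matchingMatrix, Finset.card_filter]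

theorem feasible_iff_sum_matchingMatrix_col [Fintype F] (q : L → ℕ) (μ : F → L) :
    feasible q μ ↔ ∀ j, ∑ i, matchingMatrix μ i j = q j := by
  simp only [feasible, sum_matchingMatrix_col]

theorem sum_sum_mul_matchingMatrix [Fintype F] [Fintype L] {R : Type} [NonAssocSemiring R]
    (f : F → L → R) (μ : F → L) :
    ∑ i, ∑ j, f i j * (matchingMatrix μ i j : R) = ∑ i, f i (μ i) := by
  simp [matchingMatrix]

theorem eq_matchingMatrix_of_sum_row_eq_one [Fintype L] {x : F → L → ℕ} {μ : F → L}
    (hrow : ∀ i, ∑ j, x i j = 1) (hμ : ∀ i, x i (μ i) = 1) : x = matchingMatrix μ := by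
  funext i j
  unfold matchingMatrix
  split_ifs with hij
  · rw [← hij, hμ]
  · have hrest : ∑ k ∈ Finset.univ.erase (μ i), x i k = 0 := by
      have := hrow i
      rw [← Finset.add_sum_erase _ _ (Finset.mem_univ (μ i)), hμ] at this
      omega
    exact Finset.sum_eq_zero_iff.mp hrest j
      (Finset.mem_erase.mpr ⟨Ne.symm hij, Finset.mem_univ j⟩)

end MatchingMatrix

theorem iprv_optimal_solution_properties_general
    {F L : Type} [Fintype F] [Fintype L] [DecidableEq L]
    (q : L → ℕ) (π : F → L → ℝ) (prefs : F → List L) (α zs : ℝ) (v : ℕ → ℝ)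
    -- an optimal solution x of IP-RV:
    (x : F → L → ℕ)
    (hxcap : ∀ j : L, ∑ i, x i j = q j)
    (hxone : ∀ i : F, ∑ j, x i j = 1)
    (hxγ : α * zs ≤ ∑ i, ∑ j, π i j * (x i j : ℝ))
    (hxopt : ∀ x' : F → L → ℕ, (∀ i j, x' i j = 0 ∨ x' i j = 1) →
      (∀ j : L, ∑ i, x' i j = q j) → (∀ i : F, ∑ j, x' i j = 1) →
      α * zs ≤ ∑ i, ∑ j, π i j * (x' i j : ℝ) →
      ∑ i, ∑ j, v (rankOf prefs i j) * (x' i j : ℝ) ≤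
        ∑ i, ∑ j, v (rankOf prefs i j) * (x i j : ℝ))
    -- the induced matching:
    (μ : F → L) (hμ : ∀ i, x i (μ i) = 1) :
    feasible q μ ∧ α * zs ≤ z π μ ∧
      ∀ μ' : F → L, feasible q μ' → α * zs ≤ z π μ' →
        welfare v prefs μ' ≤ welfare v prefs μ := by
  obtain rfl := eq_matchingMatrix_of_sum_row_eq_one hxone hμ
  simp only [sum_sum_mul_matchingMatrix] at hxγ hxopt
  refine ⟨(feasible_iff_sum_matchingMatrix_col q μ).2 hxcap, hxγ, fun μ' hfeas' hz' => ?_⟩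
  simpa only [sum_sum_mul_matchingMatrix, welfare] using
    hxopt (matchingMatrix μ') (matchingMatrix_eq_zero_or_eq_one μ')
      ((feasible_iff_sum_matchingMatrix_col q μ').1 hfeas') (sum_matchingMatrix_row μ')
      (by rwa [sum_sum_mul_matchingMatrix])

/-- Any matching induced by an optimal solution of IP-RV with `γ = α * z*` is
feasible, is an `α`-approximation of the government-optimal matching, and maximizes the
rank-value welfare among all feasible matchings achieving at least `α * z*`. -/
theorem iprv_optimal_solution_properties
    {F L : Type} [Fintype F] [Fintype L] [DecidableEq L]
    (q : L → ℕ) (π : F → L → ℝ) (prefs : F → List L) (α zs : ℝ) (v : ℕ → ℝ)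
    (hq : ∑ j, q j = Fintype.card F)
    (hπ : ∀ i j, π i j ∈ Set.Icc (0 : ℝ) 1)
    (hα : α ∈ Set.Icc (0 : ℝ) 1)
    (hv : ∀ k k' : ℕ, k ≤ k' → v k' ≤ v k)
    (hzs : IsGreatest {x : ℝ | ∃ μ : F → L, feasible q μ ∧ x = z π μ} zs)
    (hprefs : ∀ i, (prefs i).Nodup ∧ ∀ j : L, j ∈ prefs i)
    -- an optimal solution x of IP-RV:
    (x : F → L → ℕ)
    (hx01 : ∀ i j, x i j = 0 ∨ x i j = 1)
    (hxcap : ∀ j : L, ∑ i, x i j = q j)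
    (hxone : ∀ i : F, ∑ j, x i j = 1)
    (hxγ : α * zs ≤ ∑ i, ∑ j, π i j * (x i j : ℝ))
    (hxopt : ∀ x' : F → L → ℕ, (∀ i j, x' i j = 0 ∨ x' i j = 1) →
      (∀ j : L, ∑ i, x' i j = q j) → (∀ i : F, ∑ j, x' i j = 1) →
      α * zs ≤ ∑ i, ∑ j, π i j * (x' i j : ℝ) →
      ∑ i, ∑ j, v (rankOf prefs i j) * (x' i j : ℝ) ≤
        ∑ i, ∑ j, v (rankOf prefs i j) * (x i j : ℝ))
    -- the induced matching:
    (μ : F → L) (hμ : ∀ i, x i (μ i) = 1) :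
    feasible q μ ∧ α * zs ≤ z π μ ∧
      ∀ μ' : F → L, feasible q μ' → α * zs ≤ z π μ' →
        welfare v prefs μ' ≤ welfare v prefs μ :=
  iprv_optimal_solution_properties_general q π prefs α zs v x hxcap hxone hxγ hxopt μ hμ
end

section
/- If a rank value function v is strictly decreasing, then any CRV output matching μ is constrained Pareto-undominated in the following sense: there is no feasible matching μ' with z(μ') ≥ α·z* such that every family weakly prefers μ'(i) to μ(i) and at least one family strictly prefers μ'(i) to μ(i). -/
theorem rankOf_mem_Icc {F L : Type} [Fintype L] [DecidableEq L] {prefs : F → List L} {i : F}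
    (hnodup : (prefs i).Nodup) {j : L} (hj : j ∈ prefs i) :
    rankOf prefs i j ∈ Set.Icc 1 (Fintype.card L) :=
  ⟨Nat.le_add_left 1 _, (List.idxOf_lt_length_iff.2 hj).trans_le hnodup.length_le_card⟩

theorem strictAntiOn_Icc_of_add_one_lt {β : Type*} [Preorder β] {v : ℕ → β} {n : ℕ}
    (hv : ∀ k : ℕ, 1 ≤ k → k + 1 ≤ n → v (k + 1) < v k) :
    StrictAntiOn v (Set.Icc 1 n) :=
  strictAntiOn_of_add_one_lt Set.ordConnected_Icc fun k _ hk hk1 => hv k hk.1 hk1.2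

theorem welfare_lt_welfare_of_rank_pareto {F L : Type} [Fintype F] [DecidableEq L]
    {v : ℕ → ℝ} {prefs : F → List L} {μ μ' : F → L} {s : Set ℕ} (hv : StrictAntiOn v s)
    (hμ : ∀ i, rankOf prefs i (μ i) ∈ s) (hμ' : ∀ i, rankOf prefs i (μ' i) ∈ s)
    (hweak : ∀ i, rankOf prefs i (μ' i) ≤ rankOf prefs i (μ i))
    (hstrict : ∃ i, rankOf prefs i (μ' i) < rankOf prefs i (μ i)) :
    welfare v prefs μ < welfare v prefs μ' := by
  obtain ⟨i, hi⟩ := hstrict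
  exact Finset.sum_lt_sum (fun j _ => hv.antitoneOn (hμ' j) (hμ j) (hweak j))
    ⟨i, Finset.mem_univ i, hv (hμ' i) (hμ i) hi⟩

theorem crv_constrained_pareto_undominated_general
    {F L : Type} [Fintype F] [Fintype L] [DecidableEq L]
    (q : L → ℕ) (π : F → L → ℝ) (prefs : F → List L) (α zs : ℝ) (v : ℕ → ℝ)
    (hprefs : ∀ i, (prefs i).Nodup ∧ ∀ j : L, j ∈ prefs i)
    (hv : ∀ k : ℕ, 1 ≤ k → k + 1 ≤ Fintype.card L → v (k + 1) < v k)
    -- μ is a CRV output: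
    (μ : F → L)
    (hOpt : ∀ μ' : F → L, feasible q μ' → α * zs ≤ z π μ' →
      welfare v prefs μ' ≤ welfare v prefs μ) :
    ¬ ∃ μ' : F → L, feasible q μ' ∧ α * zs ≤ z π μ' ∧
        (∀ i : F, rankOf prefs i (μ' i) ≤ rankOf prefs i (μ i)) ∧
        (∃ i : F, rankOf prefs i (μ' i) < rankOf prefs i (μ i)) := by
  rintro ⟨μ', hFeas', hZ', hweak, hstrict⟩
  have hrank : ∀ (ν : F → L) i, rankOf prefs i (ν i) ∈ Set.Icc 1 (Fintype.card L) :=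
    fun ν i => rankOf_mem_Icc (hprefs i).1 ((hprefs i).2 (ν i))
  exact (hOpt μ' hFeas' hZ').not_gt <| welfare_lt_welfare_of_rank_pareto
    (strictAntiOn_Icc_of_add_one_lt hv) (hrank μ) (hrank μ') hweak hstrict

/-- If the rank value function is strictly decreasing, any CRV output is
constrained Pareto-undominated: no feasible matching meeting the `α`-approximation
constraint makes every family weakly better off and some family strictly better off. -/
theorem crv_constrained_pareto_undominated
    {F L : Type} [Fintype F] [Fintype L] [DecidableEq L]
    (q : L → ℕ) (π : F → L → ℝ) (prefs : F → List L) (α zs : ℝ) (v : ℕ → ℝ)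
    (hq : ∑ j, q j = Fintype.card F)
    (hπ : ∀ i j, π i j ∈ Set.Icc (0 : ℝ) 1)
    (hα : α ∈ Set.Icc (0 : ℝ) 1)
    (hzs : IsGreatest {x : ℝ | ∃ μ : F → L, feasible q μ ∧ x = z π μ} zs)
    (hprefs : ∀ i, (prefs i).Nodup ∧ ∀ j : L, j ∈ prefs i)
    (hv : ∀ k : ℕ, 1 ≤ k → k + 1 ≤ Fintype.card L → v (k + 1) < v k)
    -- μ is a CRV output:
    (μ : F → L) (hFeas : feasible q μ) (hZ : α * zs ≤ z π μ)
    (hOpt : ∀ μ' : F → L, feasible q μ' → α * zs ≤ z π μ' →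
      welfare v prefs μ' ≤ welfare v prefs μ) :
    ¬ ∃ μ' : F → L, feasible q μ' ∧ α * zs ≤ z π μ' ∧
        (∀ i : F, rankOf prefs i (μ' i) ≤ rankOf prefs i (μ i)) ∧
        (∃ i : F, rankOf prefs i (μ' i) < rankOf prefs i (μ i)) :=
  crv_constrained_pareto_undominated_general q π prefs α zs v hprefs hv μ hOpt
end
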